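/- Let r ∈ ℓ²(ℤ) and for n > N let H(n) be Hilbert–Schmidt operators with H_* = sup_{n>N} ‖H(n)‖_{HS} < ∞. Then ∑_{n>N} n^{-2} [∑_{i,j≠±n} |(n-i)/(n+i)|^{1/2} |(n+j)/(n-j)|^{1/2} |r(n-i)||r(n+j)| |H_{ij}(n)|]² ≤ C H_*² ‖r‖² (E_N(r)² + ‖r‖²/N), where C is an absolute constant. -/

import Mathlib

/-!
For fixed `n`, Cauchy–Schwarz in `(i, j)` bounds the inner sum by `‖H(n)‖_HS` times two weighted
`ℓ²` masses of `r`, and the substitutions `k = n - i`, `k = n + j` turn both of them into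
`A(n) = ∑ₖ |k / (2n - k)| |r k|²`. As `|k / (2n - k)| ≤ 1` for `|k| ≤ n` and
`|k / (2n - k)| ≤ 1 + 2n / |2n - k|` otherwise, `A(n) ≤ ‖r‖² + 2n C(n)` with
`C(n) = ∑_{|k| > n} |r k|² / |2n - k|`. The first part contributes `‖r‖⁴ ∑_{n > N} n⁻² ≤ 2‖r‖⁴ / N`.
For the second, Cauchy–Schwarz gives `C(n)² ≤ E_N(r)² ∑ₖ |r k|² / (2n - k)²`, and summing over `n`
costs only the constant `∑ₘ m⁻²`. Working in `ℝ≥0∞` removes all summability side conditions.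
-/

noncomputable section

open scoped ENNReal

namespace ENNReal

theorem tsum_mul_sq_le {α : Type*} (f g : α → ℝ≥0∞) :
    (∑' i, f i * g i) ^ 2 ≤ (∑' i, f i ^ 2) * ∑' i, g i ^ 2 := by
  let : MeasurableSpace α := ⊤
  have : MeasurableSingletonClass α := ⟨fun _ => trivial⟩
  have hCS := lintegral_mul_le_Lp_mul_Lq MeasureTheory.Measure.count
    Real.HolderConjugate.two_two (measurable_from_top (f := f)).aemeasurable
    (measurable_from_top (f := g)).aemeasurable
  simp only [Pi.mul_apply, MeasureTheory.lintegral_count] at hCS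
  calc (∑' i, f i * g i) ^ 2
      ≤ ((∑' i, f i ^ (2 : ℝ)) ^ (1 / (2 : ℝ)) * (∑' i, g i ^ (2 : ℝ)) ^ (1 / (2 : ℝ))) ^ 2 := by
        gcongr
    _ = (∑' i, f i ^ 2) * ∑' i, g i ^ 2 := by
        rw [mul_pow, ← rpow_natCast, ← rpow_natCast, ← rpow_mul, ← rpow_mul]
        norm_num

theorem add_sq_le_two_mul (a b : ℝ≥0∞) : (a + b) ^ 2 ≤ 2 * (a ^ 2 + b ^ 2) := by
  induction a using recTopCoe <;> induction b using recTopCoe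
  all_goals try simp
  exact_mod_cast add_sq_le (R := NNReal)

theorem ofReal_tsum_le {α : Type*} {f : α → ℝ} (hf : ∀ a, 0 ≤ f a) :
    ENNReal.ofReal (∑' a, f a) ≤ ∑' a, ENNReal.ofReal (f a) := by
  by_cases h : Summable f
  · rw [ofReal_tsum_of_nonneg hf h]
  · simp [tsum_eq_zero_of_not_summable h]

theorem tsum_subtype_mul_mul_sq_le {ι κ : Type*} (P : ι × κ → Prop) (a : ι → ℝ≥0∞)
    (b : κ → ℝ≥0∞) (h : ι × κ → ℝ≥0∞) :
    (∑' p : {p // P p}, a p.1.1 * b p.1.2 * h p.1) ^ 2 ≤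
      (∑' i, a i ^ 2) * (∑' j, b j ^ 2) * ∑' p, h p ^ 2 :=
  calc _ ≤ (∑' p : {p // P p}, (a p.1.1 * b p.1.2) ^ 2) * ∑' p : {p // P p}, h p.1 ^ 2 :=
        tsum_mul_sq_le _ _
    _ ≤ (∑' p : ι × κ, (a p.1 * b p.2) ^ 2) * ∑' p, h p ^ 2 := by
        gcongr <;> exact tsum_comp_le_tsum_of_injective Subtype.val_injective _
    _ = _ := by
        simp only [mul_pow, ENNReal.tsum_prod', ENNReal.tsum_mul_left, ENNReal.tsum_mul_right]

end ENNReal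

theorem tsum_enorm_sq_eq_ofReal {α E : Type*} [SeminormedAddGroup E] {f : α → E}
    (hf : Summable fun a => ‖f a‖ ^ 2) :
    ∑' a, ‖f a‖ₑ ^ 2 = ENNReal.ofReal (∑' a, ‖f a‖ ^ 2) := by
  rw [ENNReal.ofReal_tsum_of_nonneg (fun _ => by positivity) hf]
  simp only [ENNReal.ofReal_pow (norm_nonneg _), ofReal_norm]

theorem abs_div_two_mul_sub_le_one {a t : ℝ} (h : |t| ≤ a) : |t / (2 * a - t)| ≤ 1 := by
  rw [abs_div]
  refine div_le_one_of_le₀ ?_ (abs_nonneg _)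
  calc |t| ≤ 2 * a - t := by linarith [le_abs_self t]
    _ ≤ |2 * a - t| := le_abs_self _

theorem abs_div_two_mul_sub_le {a : ℝ} (t : ℝ) (ha : 0 ≤ a) :
    |t / (2 * a - t)| ≤ 1 + 2 * a / |2 * a - t| := by
  rcases eq_or_ne (2 * a - t) 0 with h | h
  · simp only [h, div_zero, abs_zero]
    positivity
  · have hpos : 0 < |2 * a - t| := abs_pos.mpr h
    rw [abs_div, div_le_iff₀ hpos, add_mul, one_mul, div_mul_cancel₀ _ hpos.ne']
    have := abs_sub_abs_le_abs_sub t (2 * a)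
    rw [abs_sub_comm, abs_of_nonneg (by positivity : 0 ≤ 2 * a)] at this
    linarith

theorem tsum_ofReal_inv_sq_gt_le (N : ℕ) :
    ∑' n : {n : ℕ // N < n}, ENNReal.ofReal (1 / (n : ℝ) ^ 2) ≤ 2 / N := by
  have hshift : Function.Surjective fun m : ℕ => (⟨m + (N + 1), by omega⟩ : {n : ℕ // N < n}) :=
    fun n => ⟨n.1 - (N + 1), Subtype.ext (by have := n.2; simp only; omega)⟩
  refine (ENNReal.tsum_le_tsum_comp_of_surjective hshift _).trans
    (ENNReal.tsum_le_of_sum_range_le fun M => ?_)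
  calc ∑ m ∈ Finset.range M, ENNReal.ofReal (1 / ((m + (N + 1) : ℕ) : ℝ) ^ 2)
      = ENNReal.ofReal (∑ i ∈ Finset.Ioo N (N + 1 + M), ((i : ℝ) ^ 2)⁻¹) := by
        rw [← Finset.Ico_add_one_left_eq_Ioo, Finset.sum_Ico_eq_sum_range,
          add_tsub_cancel_left, ENNReal.ofReal_sum_of_nonneg fun _ _ => by positivity]
        simp only [one_div, add_comm]
    _ ≤ ENNReal.ofReal (2 / (N + 1)) := ENNReal.ofReal_le_ofReal (sum_Ioo_inv_sq_le N _)
    _ ≤ 2 / N := by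
        rw [ENNReal.ofReal_div_of_pos (by positivity)]
        simp only [ENNReal.ofReal_ofNat]
        exact ENNReal.div_le_div_left (by exact_mod_cast N.le_succ) 2

theorem tsum_ofReal_inv_sq_two_mul_sub_le (k : ℤ) :
    ∑' n : ℕ, ENNReal.ofReal (1 / (2 * (n : ℝ) - k) ^ 2) ≤
      ENNReal.ofReal (∑' m : ℤ, 1 / (m : ℝ) ^ 2) := by
  have hinj : Function.Injective fun n : ℕ => 2 * (n : ℤ) - k := fun a b h => by
    simp only at h; omega
  rw [ENNReal.ofReal_tsum_of_nonneg (fun _ => by positivity)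
    (Real.summable_one_div_int_pow.mpr one_lt_two)]
  convert ENNReal.tsum_comp_le_tsum_of_injective hinj
    (fun m : ℤ => ENNReal.ofReal (1 / (m : ℝ) ^ 2)) using 4
  push_cast; rfl

section Mass

variable (x : ℤ → ℝ≥0∞)

-- At `k = 2n`, i.e. at the excluded indices `i = -n`, `j = n`, the weight is `|2n / 0| = 0`.
def ratioMass (n : ℕ) : ℝ≥0∞ :=
  ∑' k : ℤ, ENNReal.ofReal |(k : ℝ) / (2 * n - k)| * x k ^ 2

def tailMass (n : ℕ) : ℝ≥0∞ :=
  ∑' k : ℤ, if (n : ℤ) < |k| then ENNReal.ofReal (1 / |2 * (n : ℝ) - k|) * x k ^ 2 else 0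

theorem ratioMass_eq_tsum_sub (n : ℕ) :
    ratioMass x n = ∑' i : ℤ, ENNReal.ofReal |((n : ℝ) - i) / (n + i)| * x (n - i) ^ 2 := by
  rw [ratioMass, ← (Equiv.subLeft (n : ℤ)).tsum_eq]
  refine tsum_congr fun i => ?_
  simp only [Equiv.subLeft_apply]
  push_cast
  ring_nf

theorem ratioMass_eq_tsum_add (n : ℕ) :
    ratioMass x n = ∑' j : ℤ, ENNReal.ofReal |((n : ℝ) + j) / (n - j)| * x (n + j) ^ 2 := by
  rw [ratioMass, ← (Equiv.addLeft (n : ℤ)).tsum_eq]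
  refine tsum_congr fun j => ?_
  simp only [Equiv.coe_addLeft]
  push_cast
  ring_nf

theorem ratioMass_le (n : ℕ) : ratioMass x n ≤ ∑' k, x k ^ 2 + 2 * n * tailMass x n := by
  rw [ratioMass, tailMass, ← ENNReal.tsum_mul_left, ← ENNReal.tsum_add]
  refine ENNReal.tsum_le_tsum fun k => ?_
  split_ifs with hk
  · calc ENNReal.ofReal |(k : ℝ) / (2 * n - k)| * x k ^ 2
        ≤ ENNReal.ofReal (1 + 2 * n * (1 / |2 * (n : ℝ) - k|)) * x k ^ 2 := by
          rw [mul_one_div]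
          gcongr
          exact abs_div_two_mul_sub_le _ n.cast_nonneg
      _ = _ := by
          rw [ENNReal.ofReal_add zero_le_one (by positivity), ENNReal.ofReal_mul (by positivity)]
          simp only [ENNReal.ofReal_one, ENNReal.ofReal_mul zero_le_two, ENNReal.ofReal_ofNat,
            ENNReal.ofReal_natCast]
          ring
  · have hk' : |(k : ℝ)| ≤ n := by exact_mod_cast not_lt.mp hk
    calc ENNReal.ofReal |(k : ℝ) / (2 * n - k)| * x k ^ 2 ≤ ENNReal.ofReal 1 * x k ^ 2 := by
          gcongr
          exact abs_div_two_mul_sub_le_one hk'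
      _ = _ := by simp

theorem tailMass_sq_le {N n : ℕ} (hNn : N ≤ n) :
    tailMass x n ^ 2 ≤ (∑' k : {k : ℤ // (N : ℤ) ≤ |k|}, x k ^ 2) *
      ∑' k : ℤ, ENNReal.ofReal (1 / (2 * (n : ℝ) - k) ^ 2) * x k ^ 2 := by
  have hfactor : tailMass x n = ∑' k : ℤ, (if (n : ℤ) < |k| then x k else 0) *
      (ENNReal.ofReal (1 / |2 * (n : ℝ) - k|) * x k) := by
    refine tsum_congr fun k => ?_
    split_ifs <;> ring
  have htail : ∑' k : {k : ℤ // (N : ℤ) ≤ |k|}, x k ^ 2 =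
      ∑' k : ℤ, if (N : ℤ) ≤ |k| then x k ^ 2 else 0 :=
    (tsum_subtype {k : ℤ | (N : ℤ) ≤ |k|} fun k => x k ^ 2).trans
      (tsum_congr fun k => by simp only [Set.indicator_apply, Set.mem_ofPred_eq])
  rw [hfactor, htail]
  refine (ENNReal.tsum_mul_sq_le _ _).trans (mul_le_mul' (ENNReal.tsum_le_tsum fun k => ?_)
    (ENNReal.tsum_le_tsum fun k => le_of_eq ?_))
  · split_ifs with hn hN
    · rfl
    · exact absurd (by omega) hN
    all_goals simp
  · rw [mul_pow, ← ENNReal.ofReal_pow (by positivity), div_pow, one_pow, sq_abs]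

theorem tsum_tailMass_sq_le (N : ℕ) :
    ∑' n : {n : ℕ // N < n}, tailMass x n ^ 2 ≤ (∑' k : {k : ℤ // (N : ℤ) ≤ |k|}, x k ^ 2) *
      (ENNReal.ofReal (∑' m : ℤ, 1 / (m : ℝ) ^ 2) * ∑' k, x k ^ 2) :=
  calc _ ≤ ∑' n : {n : ℕ // N < n}, (∑' k : {k : ℤ // (N : ℤ) ≤ |k|}, x k ^ 2) *
        ∑' k : ℤ, ENNReal.ofReal (1 / (2 * (n : ℝ) - k) ^ 2) * x k ^ 2 :=
        ENNReal.tsum_le_tsum fun n => tailMass_sq_le x n.2.le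
    _ ≤ (∑' k : {k : ℤ // (N : ℤ) ≤ |k|}, x k ^ 2) *
        ∑' n : ℕ, ∑' k : ℤ, ENNReal.ofReal (1 / (2 * (n : ℝ) - k) ^ 2) * x k ^ 2 := by
        rw [ENNReal.tsum_mul_left]
        gcongr
        exact ENNReal.tsum_comp_le_tsum_of_injective Subtype.val_injective
          (fun n : ℕ => ∑' k : ℤ, ENNReal.ofReal (1 / (2 * (n : ℝ) - k) ^ 2) * x k ^ 2)
    _ ≤ _ := by
        gcongr
        rw [ENNReal.tsum_comm, ← ENNReal.tsum_mul_left]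
        gcongr with k
        rw [ENNReal.tsum_mul_right]
        gcongr
        exact tsum_ofReal_inv_sq_two_mul_sub_le k

theorem tsum_inv_sq_mul_ratioMass_sq_le (N : ℕ) :
    ∑' n : {n : ℕ // N < n}, ENNReal.ofReal (1 / (n : ℝ) ^ 2) * ratioMass x n ^ 2 ≤
      (8 * ENNReal.ofReal (∑' m : ℤ, 1 / (m : ℝ) ^ 2) + 4) * (∑' k, x k ^ 2) *
        ((∑' k : {k : ℤ // (N : ℤ) ≤ |k|}, x k ^ 2) + (∑' k, x k ^ 2) / N) := by
  set K := ENNReal.ofReal (∑' m : ℤ, 1 / (m : ℝ) ^ 2)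
  set T := ∑' k, x k ^ 2
  set E := ∑' k : {k : ℤ // (N : ℤ) ≤ |k|}, x k ^ 2
  have hterm (n : {n : ℕ // N < n}) :
      ENNReal.ofReal (1 / (n : ℝ) ^ 2) * ratioMass x n ^ 2 ≤
        2 * T ^ 2 * ENNReal.ofReal (1 / (n : ℝ) ^ 2) + 8 * tailMass x n ^ 2 := by
    have hn : ENNReal.ofReal (1 / (n : ℝ) ^ 2) * (2 * n) ^ 2 = 4 := by
      have hn0 : 0 < (n : ℕ) := (Nat.zero_le N).trans_lt n.2
      rw [ENNReal.ofReal_div_of_pos (by positivity), ENNReal.ofReal_one,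
        ENNReal.ofReal_pow (by positivity), ENNReal.ofReal_natCast, mul_pow, mul_left_comm,
        ENNReal.div_mul_cancel (by positivity) (by simp)]
      norm_num
    calc _ ≤ ENNReal.ofReal (1 / (n : ℝ) ^ 2) * (2 * (T ^ 2 + (2 * n * tailMass x n) ^ 2)) := by
          gcongr
          exact (pow_le_pow_left' (ratioMass_le x n) 2).trans (ENNReal.add_sq_le_two_mul _ _)
      _ = 2 * T ^ 2 * ENNReal.ofReal (1 / (n : ℝ) ^ 2) +
            2 * (ENNReal.ofReal (1 / (n : ℝ) ^ 2) * (2 * n) ^ 2) * tailMass x n ^ 2 := by ring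
      _ = _ := by rw [hn]; ring
  calc _ ≤ ∑' n : {n : ℕ // N < n},
        (2 * T ^ 2 * ENNReal.ofReal (1 / (n : ℝ) ^ 2) + 8 * tailMass x n ^ 2) :=
        ENNReal.tsum_le_tsum hterm
    _ = 2 * T ^ 2 * ∑' n : {n : ℕ // N < n}, ENNReal.ofReal (1 / (n : ℝ) ^ 2) +
          8 * ∑' n : {n : ℕ // N < n}, tailMass x n ^ 2 := by
        rw [ENNReal.tsum_add, ENNReal.tsum_mul_left, ENNReal.tsum_mul_left]
    _ ≤ 2 * T ^ 2 * (2 / N) + 8 * (E * (K * T)) := by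
        gcongr
        · exact tsum_ofReal_inv_sq_gt_le N
        · exact tsum_tailMass_sq_le x N
    _ = 4 * T * T * (N : ℝ≥0∞)⁻¹ + 8 * K * T * E := by rw [div_eq_mul_inv]; ring
    _ ≤ 4 * T * T * (N : ℝ≥0∞)⁻¹ + 8 * K * T * E +
          (8 * K * T * T * (N : ℝ≥0∞)⁻¹ + 4 * T * E) := le_self_add
    _ = _ := by rw [div_eq_mul_inv]; ring

end Mass

theorem ofReal_sq_tsum_ratio_weighted_le {E F : Type*} [SeminormedAddGroup E]
    [SeminormedAddGroup F]
    (r : ℤ → E) (h : ℤ → ℤ → F) (n : ℕ) (P : ℤ × ℤ → Prop) :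
    ENNReal.ofReal ((∑' p : {p : ℤ × ℤ // P p},
        √|((n : ℝ) - p.1.1) / (n + p.1.1)| * √|((n : ℝ) + p.1.2) / (n - p.1.2)| *
          ‖r (n - p.1.1)‖ * ‖r (n + p.1.2)‖ * ‖h p.1.1 p.1.2‖) ^ 2) ≤
      ratioMass (‖r ·‖ₑ) n ^ 2 * ∑' p : ℤ × ℤ, ‖h p.1 p.2‖ₑ ^ 2 := by
  have hsq (y : ℝ) (z : ℝ≥0∞) : (ENNReal.ofReal √|y| * z) ^ 2 = ENNReal.ofReal |y| * z ^ 2 := by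
    rw [mul_pow, ← ENNReal.ofReal_pow (Real.sqrt_nonneg _), Real.sq_sqrt (abs_nonneg _)]
  rw [ENNReal.ofReal_pow (tsum_nonneg fun _ => by positivity)]
  refine (pow_le_pow_left' (ENNReal.ofReal_tsum_le fun _ => by positivity) 2).trans ?_
  refine (Eq.trans_le ?_ (ENNReal.tsum_subtype_mul_mul_sq_le P
    (fun i => ENNReal.ofReal √|((n : ℝ) - i) / (n + i)| * ‖r (n - i)‖ₑ)
    (fun j => ENNReal.ofReal √|((n : ℝ) + j) / (n - j)| * ‖r (n + j)‖ₑ)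
    fun p => ‖h p.1 p.2‖ₑ)).trans_eq ?_
  · refine congrArg (· ^ 2) (tsum_congr fun p => ?_)
    simp only [ENNReal.ofReal_mul' (norm_nonneg _), ENNReal.ofReal_mul' (Real.sqrt_nonneg _),
      ofReal_norm]
    ring
  · rw [sq (ratioMass _ n)]
    nth_rw 1 [ratioMass_eq_tsum_sub]
    rw [ratioMass_eq_tsum_add]
    simp only [hsq]

theorem tsum_inv_sq_mul_ratioMass_enorm_sq_le {E : Type*} [SeminormedAddGroup E] {r : ℤ → E}
    (hr : Summable fun k => ‖r k‖ ^ 2) {N : ℕ} (hN : 1 ≤ N) :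
    ∑' n : {n : ℕ // N < n}, ENNReal.ofReal (1 / (n : ℝ) ^ 2) * ratioMass (‖r ·‖ₑ) n ^ 2 ≤
      ENNReal.ofReal ((8 * ∑' m : ℤ, 1 / (m : ℝ) ^ 2 + 4) * (∑' k, ‖r k‖ ^ 2) *
        ((∑' k : {k : ℤ // (N : ℤ) ≤ |k|}, ‖r k.1‖ ^ 2) + (∑' k, ‖r k‖ ^ 2) / N)) := by
  have hN0 : (0 : ℝ) < N := by exact_mod_cast hN
  refine (tsum_inv_sq_mul_ratioMass_sq_le _ N).trans_eq ?_
  rw [tsum_enorm_sq_eq_ofReal hr,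
    tsum_enorm_sq_eq_ofReal (f := fun k : {k : ℤ // (N : ℤ) ≤ |k|} => r k) (hr.subtype _),
    ENNReal.ofReal_mul (by positivity), ENNReal.ofReal_mul (by positivity),
    ENNReal.ofReal_add (by positivity) (by positivity),
    ENNReal.ofReal_add (by positivity) (by positivity), ENNReal.ofReal_mul (by positivity),
    ENNReal.ofReal_div_of_pos hN0]
  simp only [ENNReal.ofReal_ofNat, ENNReal.ofReal_natCast]

/-- Lemma 3.2a of the paper. -/
theorem weighted_double_sum_series_estimate :
    ∃ C : ℝ, 0 < C ∧
      ∀ (N : ℕ), 1 ≤ N →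
      ∀ (r : ℤ → ℂ) (H : ℕ → ℤ → ℤ → ℂ) (Hstar : ℝ),
        Summable (fun k => ‖r k‖ ^ 2) →
        (∀ n : ℕ, N < n → Summable (fun p : ℤ × ℤ => ‖H n p.1 p.2‖ ^ 2) ∧
          Real.sqrt (∑' p : ℤ × ℤ, ‖H n p.1 p.2‖ ^ 2) ≤ Hstar) →
        (∑' n : {n : ℕ // N < n},
          (1 / (n.1 : ℝ) ^ 2) *
            (∑' p : {p : ℤ × ℤ // p.1 ≠ (n.1 : ℤ) ∧ p.1 ≠ -(n.1 : ℤ) ∧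
                p.2 ≠ (n.1 : ℤ) ∧ p.2 ≠ -(n.1 : ℤ)},
              Real.sqrt |((n.1 : ℝ) - (p.1.1 : ℝ)) / ((n.1 : ℝ) + (p.1.1 : ℝ))| *
                Real.sqrt |((n.1 : ℝ) + (p.1.2 : ℝ)) / ((n.1 : ℝ) - (p.1.2 : ℝ))| *
                ‖r ((n.1 : ℤ) - p.1.1)‖ * ‖r ((n.1 : ℤ) + p.1.2)‖ *
                ‖H n.1 p.1.1 p.1.2‖) ^ 2)
        ≤ C * Hstar ^ 2 * (∑' k : ℤ, ‖r k‖ ^ 2) *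
            ((∑' k : {k : ℤ // (N : ℤ) ≤ |k|}, ‖r k.1‖ ^ 2) +
              (∑' k : ℤ, ‖r k‖ ^ 2) / (N : ℝ)) := by
  refine ⟨8 * ∑' m : ℤ, 1 / (m : ℝ) ^ 2 + 4, by positivity, fun N hN r H Hstar hr hH => ?_⟩
  have hHS (n : {n : ℕ // N < n}) :
      ∑' p : ℤ × ℤ, ‖H n p.1 p.2‖ₑ ^ 2 ≤ ENNReal.ofReal (Hstar ^ 2) := by
    obtain ⟨hsum, hle⟩ := hH n n.2
    rw [tsum_enorm_sq_eq_ofReal hsum]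
    exact ENNReal.ofReal_le_ofReal (Real.sqrt_le_iff.mp hle).2
  rw [← ENNReal.ofReal_le_ofReal_iff (by positivity)]
  calc _ ≤ ∑' n : {n : ℕ // N < n}, ENNReal.ofReal (1 / (n : ℝ) ^ 2) *
        (ratioMass (‖r ·‖ₑ) n ^ 2 * ENNReal.ofReal (Hstar ^ 2)) := by
        refine (ENNReal.ofReal_tsum_le fun _ => by positivity).trans
          (ENNReal.tsum_le_tsum fun n => ?_)
        rw [ENNReal.ofReal_mul (by positivity)]
        gcongr
        exact (ofReal_sq_tsum_ratio_weighted_le r (H n) n _).trans (by gcongr; exact hHS n)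
    _ = ENNReal.ofReal (Hstar ^ 2) * ∑' n : {n : ℕ // N < n},
          ENNReal.ofReal (1 / (n : ℝ) ^ 2) * ratioMass (‖r ·‖ₑ) n ^ 2 := by
        rw [← ENNReal.tsum_mul_left]
        exact tsum_congr fun n => by ring
    _ ≤ _ := by
        grw [tsum_inv_sq_mul_ratioMass_enorm_sq_le hr hN, ← ENNReal.ofReal_mul (by positivity)]
        exact le_of_eq (congrArg _ (by ring))
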